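/- Let Φ(x) = (2π)^{−1/2} ∫_{−∞}^x e^{−t²/2} dt and φ(x) = (2π)^{−1/2} e^{−x²/2}. Then for every x ∈ [−2, 0), φ(x)/Φ(x) ≤ 2.374. -/

import Mathlib

/-!
Write `I(x) = ∫_{-∞}^x e^{-t²/2} dt`, so that `φ(x)/Φ(x) = e^{-x²/2}/I(x)`, and put `c = 2.374`.
For `t ≥ -2 ≥ -c` we have `(e^{-t²/2})' = -t e^{-t²/2} ≤ c e^{-t²/2}`, so
`e^{-x²/2} - e^{-2} ≤ c ∫_{-2}^x e^{-t²/2} dt` for `x ≥ -2`, and it remains to bound the tail: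
`e^{-2} ≤ c I(-2)`. This is tight (`c I(-2) ≈ 1.00033 e^{-2}`), and is obtained by comparing
`∫_{-5}^{-2} e^{-t²/2} dt` with `Q(t) e^{-t²/2}` for a polynomial `Q` with `Q' - tQ ≤ 1` on
`[-5, -2]`, `Q(-5) ≤ 0` and `c Q(-2) ≥ 1`.
-/

namespace Stmt13

/-- The standard normal cumulative distribution function
`Φ(x) = (2π)^{-1/2} ∫_{-∞}^x e^{-t²/2} dt`. -/
noncomputable def Phi (x : ℝ) : ℝ :=
  (2 * Real.pi) ^ (-(1 / 2) : ℝ) * ∫ t in Set.Iic x, Real.exp (-t ^ 2 / 2)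

/-- The standard normal density `φ(x) = (2π)^{-1/2} e^{-x²/2}`. -/
noncomputable def phi (x : ℝ) : ℝ :=
  (2 * Real.pi) ^ (-(1 / 2) : ℝ) * Real.exp (-x ^ 2 / 2)

open MeasureTheory Set Polynomial

lemma integrable_exp_neg_sq_div_two : Integrable fun t : ℝ => Real.exp (-t ^ 2 / 2) := by
  simpa [neg_div, div_eq_inv_mul] using integrable_exp_neg_mul_sq (one_half_pos (α := ℝ))

lemma hasDerivAt_exp_neg_sq_div_two (t : ℝ) :
    HasDerivAt (fun t : ℝ => Real.exp (-t ^ 2 / 2)) (-t * Real.exp (-t ^ 2 / 2)) t := by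
  have hexponent : HasDerivAt (fun t : ℝ => -t ^ 2 / 2) (-t) t :=
    (((hasDerivAt_pow 2 t).neg).div_const 2).congr_deriv (by push_cast; ring)
  exact hexponent.exp.congr_deriv (mul_comm _ _)

lemma hasDerivAt_eval_mul_exp_neg_sq_div_two (p : ℝ[X]) (t : ℝ) :
    HasDerivAt (fun t : ℝ => p.eval t * Real.exp (-t ^ 2 / 2))
      ((p.derivative.eval t - t * p.eval t) * Real.exp (-t ^ 2 / 2)) t :=
  ((p.hasDerivAt t).mul (hasDerivAt_exp_neg_sq_div_two t)).congr_deriv (by ring)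

lemma eval_mul_exp_sub_le_integral (p : ℝ[X]) {a b : ℝ} (hab : a ≤ b)
    (hp : ∀ t ∈ Ioo a b, p.derivative.eval t - t * p.eval t ≤ 1) :
    p.eval b * Real.exp (-b ^ 2 / 2) - p.eval a * Real.exp (-a ^ 2 / 2)
      ≤ ∫ t in a..b, Real.exp (-t ^ 2 / 2) := by
  refine intervalIntegral.sub_le_integral_of_hasDeriv_right_of_le hab
    (fun t _ => (hasDerivAt_eval_mul_exp_neg_sq_div_two p t).continuousAt.continuousWithinAt)
    (fun t _ => (hasDerivAt_eval_mul_exp_neg_sq_div_two p t).hasDerivWithinAt)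
    integrable_exp_neg_sq_div_two.integrableOn fun t ht => ?_
  simpa using mul_le_mul_of_nonneg_right (hp t ht) (Real.exp_pos (-t ^ 2 / 2)).le

lemma exp_neg_sq_div_two_sub_le_integral {a b c : ℝ} (hab : a ≤ b) (hca : -c ≤ a) :
    Real.exp (-b ^ 2 / 2) - Real.exp (-a ^ 2 / 2) ≤ c * ∫ t in a..b, Real.exp (-t ^ 2 / 2) := by
  rw [← intervalIntegral.integral_const_mul]
  refine intervalIntegral.sub_le_integral_of_hasDeriv_right_of_le hab
    (fun t _ => (hasDerivAt_exp_neg_sq_div_two t).continuousAt.continuousWithinAt)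
    (fun t _ => (hasDerivAt_exp_neg_sq_div_two t).hasDerivWithinAt)
    (integrable_exp_neg_sq_div_two.const_mul c).integrableOn fun t ht => ?_
  exact mul_le_mul_of_nonneg_right (by linarith [ht.1]) (Real.exp_pos _).le

lemma intervalIntegral_exp_neg_sq_div_two_le_integral_Iic {a b : ℝ} (hab : a ≤ b) :
    ∫ t in a..b, Real.exp (-t ^ 2 / 2) ≤ ∫ t in Iic b, Real.exp (-t ^ 2 / 2) := by
  rw [intervalIntegral.integral_of_le hab]
  exact setIntegral_mono_set integrable_exp_neg_sq_div_two.integrableOn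
    (Filter.Eventually.of_forall fun t => (Real.exp_pos _).le)
    (Filter.Eventually.of_forall Ioc_subset_Iic_self)

/-- The degree-8 Taylor polynomial at `-2` of the solution of `Q' - tQ = 1` with
`Q(-2) = 337/800`, slightly below the Mills ratio `R(2) ≈ 0.421369`. -/
noncomputable def millsPoly : ℝ[X] :=
  C (62789 / 50400) + C (304 / 315) * X + C (39809 / 72000) * X ^ 2 + C (1079 / 4500) * X ^ 3
    + C (4409 / 57600) * X ^ 4 + C (61 / 3600) * X ^ 5 + C (269 / 115200) * X ^ 6
    + C (79 / 504000) * X ^ 7 + C (41 / 32256000) * X ^ 8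

lemma one_sub_millsPoly_residual (t : ℝ) :
    1 - (millsPoly.derivative.eval t - t * millsPoly.eval t)
      = (-2 - t) ^ 8 * (2159 / 16128000 - 41 / 32256000 * (-2 - t)) := by
  simp only [millsPoly, derivative_C, derivative_mul, zero_mul, derivative_X,
    mul_one, zero_add, derivative_X_pow_succ, Nat.cast_one, map_add, map_one, pow_one,
    Nat.cast_ofNat, eval_add, eval_C, eval_mul, eval_one, eval_X, eval_pow]
  ring

lemma millsPoly_residual_le_one {t : ℝ} (ht : -5 ≤ t) :
    millsPoly.derivative.eval t - t * millsPoly.eval t ≤ 1 := by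
  have hres := one_sub_millsPoly_residual t
  have hfactor : 0 ≤ 2159 / 16128000 - 41 / 32256000 * (-2 - t) := by linarith
  linarith [mul_nonneg ((even_two_mul 4).pow_nonneg (-2 - t)) hfactor]

lemma millsPoly_eval_neg_two : millsPoly.eval (-2) = 337 / 800 := by
  norm_num [millsPoly]

lemma millsPoly_eval_neg_five_nonpos : millsPoly.eval (-5) ≤ 0 := by
  norm_num [millsPoly]

lemma exp_neg_two_le_integral_tail :
    337 / 800 * Real.exp (-2) ≤ ∫ t in (-5 : ℝ)..(-2), Real.exp (-t ^ 2 / 2) := by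
  have h := eval_mul_exp_sub_le_integral millsPoly (a := -5) (b := -2) (by norm_num)
    fun t ht => millsPoly_residual_le_one ht.1.le
  rw [millsPoly_eval_neg_two] at h
  have htail : millsPoly.eval (-5) * Real.exp (-(-5) ^ 2 / 2) ≤ 0 :=
    mul_nonpos_of_nonpos_of_nonneg millsPoly_eval_neg_five_nonpos (Real.exp_pos _).le
  norm_num at h htail ⊢
  linarith

lemma exp_neg_sq_div_two_le_integral_Iic {x : ℝ} (hx : -2 ≤ x) :
    Real.exp (-x ^ 2 / 2) ≤ 2.374 * ∫ t in Iic x, Real.exp (-t ^ 2 / 2) := by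
  have hint : ∀ a b : ℝ, IntervalIntegrable (fun t => Real.exp (-t ^ 2 / 2)) volume a b :=
    fun a b => integrable_exp_neg_sq_div_two.intervalIntegrable
  have hmid := exp_neg_sq_div_two_sub_le_integral (c := 2.374) hx (by norm_num)
  norm_num at hmid
  calc Real.exp (-x ^ 2 / 2)
      ≤ Real.exp (-2) + 2.374 * ∫ t in (-2)..x, Real.exp (-t ^ 2 / 2) := by linarith
    _ ≤ 2.374 * ((∫ t in (-5)..(-2), Real.exp (-t ^ 2 / 2))
          + ∫ t in (-2)..x, Real.exp (-t ^ 2 / 2)) := by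
        linarith [exp_neg_two_le_integral_tail, Real.exp_pos (-2)]
    _ = 2.374 * ∫ t in (-5)..x, Real.exp (-t ^ 2 / 2) := by
        rw [intervalIntegral.integral_add_adjacent_intervals (hint _ _) (hint _ _)]
    _ ≤ 2.374 * ∫ t in Iic x, Real.exp (-t ^ 2 / 2) := by
        gcongr
        exact intervalIntegral_exp_neg_sq_div_two_le_integral_Iic (by linarith)

/-- The reverse hazard rate of the standard normal distribution is bounded by `2.374` on
`[-2, 0)`. -/
theorem stmt_13 (x : ℝ) (hx : x ∈ Set.Ico (-2 : ℝ) 0) : phi x / Phi x ≤ 2.374 := by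
  have hbound := exp_neg_sq_div_two_le_integral_Iic hx.1
  have hI : 0 < ∫ t in Iic x, Real.exp (-t ^ 2 / 2) := by
    linarith [Real.exp_pos (-x ^ 2 / 2)]
  have hK : 0 < (2 * Real.pi) ^ (-(1 / 2) : ℝ) := by positivity
  rw [phi, Phi, mul_div_mul_left _ _ hK.ne', div_le_iff₀ hI]
  exact hbound

end Stmt13
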